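/- Fix a real k > −1. If r > 0 and J_{k+1}(s) ≠ 0 for every s in the half-open interval (0, r] (i.e. r is smaller than the first positive zero of J_{k+1}), then r·J_k(r)/J_{k+1}(r) < 2(k+1). -/

import Mathlib

/-!
By the three-term recurrence `s (J_k(s) + J_{k+2}(s)) = 2 (k+1) J_{k+1}(s)`, the claim amounts to
`J_{k+1}(r) > 0` and `J_{k+2}(r) > 0`. Write `J_ν(s) = (s/2)^ν G_ν((s/2)^2)` with `G_ν` entire and
`G_ν(0) = 1/Γ(ν+1) > 0`. By the intermediate value theorem `G_{k+1}` stays positive on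
`[0, (r/2)^2]`, and since `(x^(ν+1) G_{ν+1}(x))' = x^ν G_ν(x)`, the function `x^(k+2) G_{k+2}(x)`
increases from `0` on that interval, so `G_{k+2}((r/2)^2) > 0`.
-/

open Real Set

/-- Only meaningful for `r > 0`: the powers are real powers. -/
noncomputable def besselJ (k r : ℝ) : ℝ :=
  ∑' m : ℕ, ((-1 : ℝ) ^ m / (m.factorial * Real.Gamma (m + k + 1))) * (r / 2) ^ ((2 * m : ℝ) + k)

theorem IsPreconnected.pos_of_ne_zero {α β : Type*} [TopologicalSpace α] [LinearOrder β]
    [TopologicalSpace β] [OrderClosedTopology β] [Zero β] {s : Set α} {f : α → β}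
    (hs : IsPreconnected s) (hf : ContinuousOn f s) {a : α} (ha : a ∈ s) (hfa : 0 < f a)
    (h : ∀ x ∈ s, f x ≠ 0) : ∀ x ∈ s, 0 < f x := by
  intro x hx
  by_contra! hneg
  obtain ⟨c, hc, hfc⟩ := hs.intermediate_value hx ha hf ⟨hneg, hfa.le⟩
  exact h c hc hfc

noncomputable def besselCoeff (ν : ℝ) (m : ℕ) : ℝ :=
  (-1) ^ m / (m.factorial * Gamma (m + ν + 1))

/-- `besselJ ν s = (s/2)^ν * besselSeries ν ((s/2)^2)` for `s > 0`. -/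
noncomputable def besselSeries (ν x : ℝ) : ℝ :=
  ∑' m : ℕ, besselCoeff ν m * x ^ m

theorem besselCoeff_zero (ν : ℝ) : besselCoeff ν 0 = (Gamma (ν + 1))⁻¹ := by
  simp [besselCoeff]

theorem besselCoeff_eq_mul_besselCoeff_add_one (ν : ℝ) (m : ℕ) :
    besselCoeff ν m = (m + ν + 1) * besselCoeff (ν + 1) m := by
  rcases eq_or_ne ((m : ℝ) + ν + 1) 0 with h | h
  · -- both sides vanish, as `Gamma 0 = 0`
    simp [besselCoeff, h]
  · rw [besselCoeff, besselCoeff, ← add_assoc, Gamma_add_one h, mul_div_assoc', mul_left_comm,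
      mul_div_mul_left _ _ h]

theorem succ_mul_besselCoeff_succ (ν : ℝ) (m : ℕ) :
    (m + 1) * besselCoeff ν (m + 1) = -besselCoeff (ν + 1) m := by
  have hm : (m : ℝ) + 1 ≠ 0 := by positivity
  rw [besselCoeff, besselCoeff, Nat.factorial_succ, pow_succ]
  push_cast
  rw [show (m : ℝ) + 1 + ν + 1 = m + (ν + 1) + 1 by ring, mul_assoc ((m : ℝ) + 1),
    mul_div_assoc', mul_div_mul_left _ _ hm]
  ring

theorem eventually_abs_besselCoeff_le_inv_factorial (ν : ℝ) : ∀ᶠ m : ℕ in Filter.atTop,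
    |besselCoeff ν m| ≤ (m.factorial : ℝ)⁻¹ := by
  filter_upwards [Filter.eventually_ge_atTop ⌈1 - ν⌉₊] with m hm
  have h2 : 2 ≤ (m : ℝ) + ν + 1 := by linarith [Nat.ceil_le.mp hm]
  have hΓ : 1 ≤ Gamma (m + ν + 1) := by
    simpa [Gamma_two] using Gamma_strictMonoOn_Ici.monotoneOn self_mem_Ici h2 h2
  rw [besselCoeff, abs_div, abs_pow, abs_neg, abs_one, one_pow,
    abs_of_pos (by positivity), one_div]
  exact inv_anti₀ (by positivity) (le_mul_of_one_le_right (by positivity) hΓ)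

theorem summable_besselCoeff_mul_pow (ν x : ℝ) :
    Summable fun m : ℕ => besselCoeff ν m * x ^ m := by
  refine .of_norm_bounded_eventually_nat (Real.summable_pow_div_factorial |x|) ?_
  filter_upwards [eventually_abs_besselCoeff_le_inv_factorial ν] with m hm
  rw [norm_mul, norm_pow, Real.norm_eq_abs, Real.norm_eq_abs, div_eq_mul_inv, mul_comm]
  gcongr

theorem besselSeries_zero (ν : ℝ) : besselSeries ν 0 = (Gamma (ν + 1))⁻¹ := by
  rw [besselSeries, tsum_eq_single 0 fun m hm => by simp [hm], besselCoeff_zero]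
  simp

theorem besselSeries_eq_zero_add (ν x : ℝ) :
    besselSeries ν x = besselCoeff ν 0 + ∑' m : ℕ, besselCoeff ν (m + 1) * x ^ (m + 1) := by
  rw [besselSeries, (summable_besselCoeff_mul_pow ν x).tsum_eq_zero_add, pow_zero, mul_one]

theorem hasDerivAt_besselSeries (ν x : ℝ) :
    HasDerivAt (besselSeries ν) (-besselSeries (ν + 1) x) x := by
  have hterm (m : ℕ) (y : ℝ) : HasDerivAt (fun y => besselCoeff ν (m + 1) * y ^ (m + 1))
      (-(besselCoeff (ν + 1) m * y ^ m)) y := by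
    refine ((hasDerivAt_pow (m + 1) y).const_mul _).congr_deriv ?_
    rw [← neg_mul, ← succ_mul_besselCoeff_succ]
    push_cast
    ring
  set R := |x| + 1
  have hR : 0 < R := by positivity
  have hx : x ∈ Ioo (-R) R := ⟨by linarith [neg_abs_le x], by linarith [le_abs_self x]⟩
  have hbound (m : ℕ) (y : ℝ) (hy : y ∈ Ioo (-R) R) :
      ‖-(besselCoeff (ν + 1) m * y ^ m)‖ ≤ ‖besselCoeff (ν + 1) m * R ^ m‖ := by
    rw [norm_neg, norm_mul, norm_mul, norm_pow, norm_pow, Real.norm_eq_abs y,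
      Real.norm_eq_abs R, abs_of_pos hR]
    gcongr
    exact abs_le.2 ⟨hy.1.le, hy.2.le⟩
  have hsum := hasDerivAt_tsum_of_isPreconnected
    (summable_besselCoeff_mul_pow (ν + 1) R).norm isOpen_Ioo isPreconnected_Ioo
    (fun m y _ => hterm m y) hbound hx
    ((summable_besselCoeff_mul_pow ν x).comp_injective (add_left_injective 1)) hx
  rw [funext (besselSeries_eq_zero_add ν), besselSeries, ← tsum_neg]
  exact hsum.const_add _

theorem continuous_besselSeries (ν : ℝ) : Continuous (besselSeries ν) :=
  continuous_iff_continuousAt.2 fun x => (hasDerivAt_besselSeries ν x).continuousAt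

theorem besselSeries_add_mul_besselSeries_add_two (ν x : ℝ) :
    besselSeries ν x + x * besselSeries (ν + 2) x = (ν + 1) * besselSeries (ν + 1) x := by
  have hterm (m : ℕ) : besselCoeff ν (m + 1) * x ^ (m + 1) + x * (besselCoeff (ν + 2) m * x ^ m)
      = (ν + 1) * (besselCoeff (ν + 1) (m + 1) * x ^ (m + 1)) := by
    have h1 := besselCoeff_eq_mul_besselCoeff_add_one ν (m + 1)
    have h2 := succ_mul_besselCoeff_succ (ν + 1) m
    push_cast at h1
    rw [show ν + 1 + 1 = ν + 2 by ring] at h2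
    linear_combination x ^ (m + 1) * h1 + x ^ (m + 1) * h2
  rw [besselSeries_eq_zero_add ν, besselSeries_eq_zero_add (ν + 1), besselSeries, ← tsum_mul_left,
    add_assoc, ← Summable.tsum_add, tsum_congr hterm, tsum_mul_left,
    besselCoeff_eq_mul_besselCoeff_add_one ν 0]
  · push_cast
    ring
  · exact (summable_besselCoeff_mul_pow ν x).comp_injective (add_left_injective 1)
  · exact (summable_besselCoeff_mul_pow (ν + 2) x).mul_left x

theorem hasDerivAt_rpow_mul_besselSeries (ν : ℝ) {x : ℝ} (hx : 0 < x) :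
    HasDerivAt (fun y => y ^ (ν + 1) * besselSeries (ν + 1) y) (x ^ ν * besselSeries ν x) x := by
  refine ((Real.hasDerivAt_rpow_const (Or.inl hx.ne')).mul
    (hasDerivAt_besselSeries (ν + 1) x)).congr_deriv ?_
  rw [add_sub_cancel_right, rpow_add_one hx.ne', show ν + 1 + 1 = ν + 2 by ring]
  linear_combination -x ^ ν * besselSeries_add_mul_besselSeries_add_two ν x

theorem besselSeries_pos_of_ne_zero {ν : ℝ} (hν : -1 < ν) {X : ℝ}
    (h : ∀ x ∈ Ioc 0 X, besselSeries ν x ≠ 0) : ∀ x ∈ Icc 0 X, 0 < besselSeries ν x := by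
  have h0 : 0 < besselSeries ν 0 := by
    rw [besselSeries_zero]
    exact inv_pos.2 (Gamma_pos_of_pos (by linarith))
  intro x hx
  refine isPreconnected_Icc.pos_of_ne_zero (continuous_besselSeries ν).continuousOn
    ⟨le_rfl, hx.1.trans hx.2⟩ h0 (fun y hy => ?_) x hx
  rcases hy.1.eq_or_lt with rfl | hy0
  · exact h0.ne'
  · exact h y ⟨hy0, hy.2⟩

theorem besselSeries_succ_pos {ν : ℝ} (hν : -1 < ν) {X : ℝ} (hX : 0 < X)
    (h : ∀ x ∈ Ioo 0 X, 0 < besselSeries ν x) : 0 < besselSeries (ν + 1) X := by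
  set F := fun y => y ^ (ν + 1) * besselSeries (ν + 1) y
  have hF0 : F 0 = 0 := by simp [F, zero_rpow (by linarith : ν + 1 ≠ 0)]
  have hcont : ContinuousOn F (Icc 0 X) := fun y _ =>
    ((continuousAt_rpow_const y _ (Or.inr (by linarith))).mul
      (continuous_besselSeries _).continuousAt).continuousWithinAt
  have hmono : StrictMonoOn F (Icc 0 X) := by
    refine strictMonoOn_of_deriv_pos (convex_Icc 0 X) hcont fun x hx => ?_
    rw [interior_Icc] at hx
    rw [(hasDerivAt_rpow_mul_besselSeries ν hx.1).deriv]
    exact mul_pos (rpow_pos_of_pos hx.1 ν) (h x hx)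
  have hFX : 0 < F X := hF0 ▸ hmono (left_mem_Icc.2 hX.le) (right_mem_Icc.2 hX.le) hX
  exact pos_of_mul_pos_right hFX (rpow_nonneg hX.le _)

theorem besselJ_eq_rpow_mul_besselSeries (ν : ℝ) {s : ℝ} (hs : 0 < s) :
    besselJ ν s = (s / 2) ^ ν * besselSeries ν ((s / 2) ^ 2) := by
  rw [besselJ, besselSeries, ← tsum_mul_left]
  refine tsum_congr fun m => ?_
  rw [rpow_add (by positivity), rpow_mul_natCast (by positivity), rpow_two, besselCoeff]
  ring

theorem besselJ_two_mul_sqrt (ν : ℝ) {x : ℝ} (hx : 0 < x) :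
    besselJ ν (2 * √x) = √x ^ ν * besselSeries ν x := by
  rw [besselJ_eq_rpow_mul_besselSeries ν (by positivity), mul_div_cancel_left₀ _ two_ne_zero,
    sq_sqrt hx.le]

theorem besselJ_add_besselJ_add_two (ν : ℝ) {s : ℝ} (hs : 0 < s) :
    s * (besselJ ν s + besselJ (ν + 2) s) = 2 * (ν + 1) * besselJ (ν + 1) s := by
  simp only [besselJ_eq_rpow_mul_besselSeries _ hs]
  rw [rpow_add (by positivity), rpow_add_one (by positivity), rpow_two]
  linear_combination
    (s * (s / 2) ^ ν) * besselSeries_add_mul_besselSeries_add_two ν ((s / 2) ^ 2)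

/-- Before the first positive zero of `J_{k+1}`, we have `r J_k(r)/J_{k+1}(r) < 2(k+1)`. -/
theorem besselJ_ratio_lt_of_lt_first_zero (k : ℝ) (hk : -1 < k) (r : ℝ) (hr : 0 < r)
    (h : ∀ s ∈ Set.Ioc (0 : ℝ) r, besselJ (k + 1) s ≠ 0) :
    r * besselJ k r / besselJ (k + 1) r < 2 * (k + 1) := by
  set X := (r / 2) ^ 2
  have hX : 0 < X := by positivity
  have hG₁ : ∀ x ∈ Icc 0 X, 0 < besselSeries (k + 1) x := by
    refine besselSeries_pos_of_ne_zero (by linarith) fun x hx => ?_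
    have hsqrt : √x ≤ r / 2 := by
      simpa [X, sqrt_sq (by positivity : 0 ≤ r / 2)] using sqrt_le_sqrt hx.2
    have hs : 2 * √x ∈ Ioc 0 r := ⟨mul_pos two_pos (sqrt_pos.2 hx.1), by linarith⟩
    exact right_ne_zero_of_mul (besselJ_two_mul_sqrt (k + 1) hx.1 ▸ h _ hs)
  have hG₂ : 0 < besselSeries (k + 1 + 1) X :=
    besselSeries_succ_pos (by linarith) hX fun x hx => hG₁ x ⟨hx.1.le, hx.2.le⟩
  have hJ₁ : 0 < besselJ (k + 1) r := by
    rw [besselJ_eq_rpow_mul_besselSeries _ hr]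
    exact mul_pos (by positivity) (hG₁ X ⟨hX.le, le_rfl⟩)
  have hJ₂ : 0 < besselJ (k + 2) r := by
    rw [besselJ_eq_rpow_mul_besselSeries _ hr, show k + 2 = k + 1 + 1 by ring]
    exact mul_pos (by positivity) hG₂
  rw [div_lt_iff₀ hJ₁, ← besselJ_add_besselJ_add_two k hr]
  linarith [mul_pos hr hJ₂]
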